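/- In the balanced two-class Gaussian model, for the model f(x) = σ(wᵀx), the conditional class probability given the score satisfies P(Y=1 | wᵀX = z) = σ( (⟨w,w*⟩_Σ / ||w||_Σ²) · z ), where w* = 2Σ⁻¹μ. -/

import Mathlib

open Matrix

noncomputable section

/-- The sigmoid function. -/
def sigmoid (t : ℝ) : ℝ := 1 / (1 + Real.exp (-t))

/-- Unnormalized one-dimensional Gaussian density with mean `m` and variance `v`
(normalizing constants cancel in the Bayes ratio below). -/
def gaussDensity1 (m v z : ℝ) : ℝ := Real.exp (-((z - m) ^ 2) / (2 * v))

/-!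
The two class-conditional laws of the score `wᵀX` have the same variance `v = wᵀΣw` and
opposite means `±m`, `m = wᵀμ`, so their density ratio is `exp (-(2 m / v) z)` and the Bayes
posterior is `σ((2 m / v) z)`. Finally `Σ w* = 2μ` gives `⟨w, w*⟩_Σ = 2 m`.
-/

lemma sigmoid_eq_div_add_mul_exp {a : ℝ} (ha : 0 < a) (t : ℝ) :
    sigmoid t = a / (a + a * Real.exp (-t)) := by
  rw [sigmoid, ← mul_one_add, one_div, ← div_div, div_self ha.ne', one_div]

lemma gaussDensity1_neg_mean (m : ℝ) {v : ℝ} (hv : v ≠ 0) (z : ℝ) :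
    gaussDensity1 (-m) v z = gaussDensity1 m v z * Real.exp (-(2 * m / v * z)) := by
  rw [gaussDensity1, gaussDensity1, ← Real.exp_add]
  congr 1
  field_simp
  ring

lemma gaussDensity1_div_add_neg_mean (m : ℝ) {v : ℝ} (hv : v ≠ 0) (z : ℝ) :
    gaussDensity1 m v z / (gaussDensity1 m v z + gaussDensity1 (-m) v z)
      = sigmoid (2 * m / v * z) := by
  rw [gaussDensity1_neg_mean m hv, sigmoid_eq_div_add_mul_exp (Real.exp_pos _)]
  rfl

lemma Matrix.mulVec_nonsing_inv_mulVec {n R : Type*} [Fintype n] [DecidableEq n] [CommRing R]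
    {A : Matrix n n R} (hA : IsUnit A.det) (u : n → R) : A *ᵥ (A⁻¹ *ᵥ u) = u := by
  rw [mulVec_mulVec, mul_nonsing_inv A hA, one_mulVec]

/-- In the balanced two-class Gaussian model, the conditional class probability given the
score `wᵀX = z`, computed by Bayes' rule from the one-dimensional Gaussian mixture
`wᵀX ∼ ½ N(wᵀμ, wᵀΣw) + ½ N(−wᵀμ, wᵀΣw)`, equals
`σ((⟨w,w*⟩_Σ / ‖w‖_Σ²) · z)` with `w* = 2 Σ⁻¹ μ`. -/
theorem stmt12 {p : ℕ} (S : Matrix (Fin p) (Fin p) ℝ) (hS : S.PosDef)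
    (μv : Fin p → ℝ) (w : Fin p → ℝ) (hw : w ≠ 0) (z : ℝ) :
    ((1 / 2) * gaussDensity1 (w ⬝ᵥ μv) (w ⬝ᵥ S.mulVec w) z)
        / ((1 / 2) * gaussDensity1 (w ⬝ᵥ μv) (w ⬝ᵥ S.mulVec w) z
            + (1 / 2) * gaussDensity1 (-(w ⬝ᵥ μv)) (w ⬝ᵥ S.mulVec w) z)
      = sigmoid ((w ⬝ᵥ S.mulVec ((2 : ℝ) • S⁻¹.mulVec μv)) / (w ⬝ᵥ S.mulVec w) * z) := by
  have hv : w ⬝ᵥ S *ᵥ w ≠ 0 := (hS.dotProduct_mulVec_pos hw).ne'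
  have hw_star : w ⬝ᵥ S *ᵥ ((2 : ℝ) • S⁻¹ *ᵥ μv) = 2 * (w ⬝ᵥ μv) := by
    rw [mulVec_smul, mulVec_nonsing_inv_mulVec hS.det_pos.ne'.isUnit, dotProduct_smul, smul_eq_mul]
  rw [hw_star, ← gaussDensity1_div_add_neg_mean _ hv, ← mul_add,
    mul_div_mul_left _ _ (by norm_num : (1 / 2 : ℝ) ≠ 0)]
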